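/- arXiv:1809.06987 — 8 statements merged into one kernel-verified Lean document; each statement's English description precedes it below -/
import Mathlib

section
/- Let d_1 ≥ d_2 ≥ ... ≥ d_n > 0 be positive reals and define D_i(α) = Σ_{j=1}^i d_j^α. Then for every index i and all real numbers 0 ≤ α₁ ≤ α₂, we have D_i(α₁)/D_n(α₁) ≤ D_i(α₂)/D_n(α₂); that is, the function α ↦ D_i(α)/D_n(α) is monotone increasing on [0,∞). -/
/-!
Split `D_n = D_i + T` with the tail `T(α) = ∑_{i ≤ k < n} d_k^α`. Cross-multiplying, the claim
`D_i/(D_i + T)` increasing becomes `D_i(α₁) T(α₂) ≤ D_i(α₂) T(α₁)`, and expanding both products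
this holds term by term, since `d_j^{α₁} d_k^{α₂} ≤ d_j^{α₂} d_k^{α₁}` whenever `d_j ≥ d_k`.
-/

open Finset

theorem div_add_le_div_add_iff {K : Type*} [Field K] [LinearOrder K] [IsStrictOrderedRing K]
    {a b c d : K} (hab : 0 < a + b) (hcd : 0 < c + d) :
    a / (a + b) ≤ c / (c + d) ↔ a * d ≤ c * b := by
  rw [div_le_div_iff₀ hab hcd]
  constructor <;> intro h <;> linarith

theorem Finset.sum_mul_sum_le_sum_mul_sum {ι R : Type*} [NonUnitalNonAssocSemiring R] [PartialOrder R]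
    [IsOrderedAddMonoid R] {s t : Finset ι} {f g : ι → R}
    (h : ∀ j ∈ s, ∀ k ∈ t, f j * g k ≤ g j * f k) :
    (∑ j ∈ s, f j) * (∑ k ∈ t, g k) ≤ (∑ j ∈ s, g j) * (∑ k ∈ t, f k) := by
  rw [sum_mul_sum, sum_mul_sum]
  exact sum_le_sum fun j hj => sum_le_sum fun k hk => h j hj k hk

theorem Real.rpow_mul_rpow_le_rpow_mul_rpow {x y α₁ α₂ : ℝ} (hy : 0 < y) (hyx : y ≤ x)
    (hα : α₁ ≤ α₂) : x ^ α₁ * y ^ α₂ ≤ x ^ α₂ * y ^ α₁ := by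
  have hx : 0 < x := hy.trans_le hyx
  calc x ^ α₁ * y ^ α₂ = x ^ α₁ * y ^ α₁ * y ^ (α₂ - α₁) := by
        rw [mul_assoc, ← Real.rpow_add hy, add_sub_cancel]
    _ ≤ x ^ α₁ * y ^ α₁ * x ^ (α₂ - α₁) := by gcongr
    _ = x ^ α₂ * y ^ α₁ := by
        rw [mul_right_comm, ← Real.rpow_add hx, add_sub_cancel]

theorem stmt0_general (n : ℕ) (hn : 0 < n) (d : ℕ → ℝ)
    (hpos : ∀ j, j < n → 0 < d j)
    (hsorted : ∀ j k, j ≤ k → k < n → d k ≤ d j)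
    (i : ℕ) (hi : i ≤ n) (α₁ α₂ : ℝ) (h : α₁ ≤ α₂) :
    (∑ j ∈ Finset.range i, d j ^ α₁) / (∑ j ∈ Finset.range n, d j ^ α₁)
      ≤ (∑ j ∈ Finset.range i, d j ^ α₂) / (∑ j ∈ Finset.range n, d j ^ α₂) := by
  have total_pos (α : ℝ) : 0 < ∑ j ∈ range n, d j ^ α :=
    sum_pos (fun j hj => Real.rpow_pos_of_pos (hpos j (mem_range.mp hj)) α)
      (nonempty_range_iff.mpr hn.ne')
  have split (α : ℝ) : ∑ j ∈ range n, d j ^ α = ∑ j ∈ range i, d j ^ α + ∑ j ∈ Ico i n, d j ^ α :=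
    (sum_range_add_sum_Ico _ hi).symm
  rw [split, split, div_add_le_div_add_iff (split α₁ ▸ total_pos α₁) (split α₂ ▸ total_pos α₂)]
  refine sum_mul_sum_le_sum_mul_sum fun j hj k hk => ?_
  obtain ⟨hik, hkn⟩ := mem_Ico.mp hk
  have hjk : j ≤ k := ((mem_range.mp hj).trans_le hik).le
  exact Real.rpow_mul_rpow_le_rpow_mul_rpow (hpos k hkn) (hsorted j k hjk hkn) h

/-- Monotonicity in `α` of the normalized partial sums `D_i(α)/D_n(α)` for
decreasingly sorted positive reals `d_1 ≥ ⋯ ≥ d_n > 0`. -/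
theorem stmt0 (n : ℕ) (hn : 0 < n) (d : ℕ → ℝ)
    (hpos : ∀ j, j < n → 0 < d j)
    (hsorted : ∀ j k, j ≤ k → k < n → d k ≤ d j)
    (i : ℕ) (hi : i ≤ n) (α₁ α₂ : ℝ) (hα₁ : 0 ≤ α₁) (h : α₁ ≤ α₂) :
    (∑ j ∈ Finset.range i, d j ^ α₁) / (∑ j ∈ Finset.range n, d j ^ α₁)
      ≤ (∑ j ∈ Finset.range i, d j ^ α₂) / (∑ j ∈ Finset.range n, d j ^ α₂) :=
  stmt0_general n hn d hpos hsorted i hi α₁ α₂ h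
end

section
/- Let d_1 ≥ ... ≥ d_n > 0 and D_i(α) = Σ_{j=1}^i d_j^α. Then for every index i and every α > 0, the absolute value of the derivative of α ↦ D_i(α)/D_n(α) is at most ln(d_1/d_n). -/
/-!
Write `w_j = d_j ^ α`. By the quotient rule the derivative of `D_i / D_n` is
`(D_i' D_n - D_i D_n') / D_n ^ 2`, and splitting `D_n = D_i + (D_n - D_i)` turns the numerator into
`∑_{x ≤ i < y} w_x w_y (ln d_x - ln d_y)`. Each logarithmic difference lies in `[0, ln (d_1 / d_n)]`,
and `∑_{x ≤ i < y} w_x w_y ≤ D_n ^ 2`.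
-/

open Finset Real

section WeightedSums

variable {ι : Type*} [DecidableEq ι] {s t : Finset ι} (w L : ι → ℝ)

theorem sum_mul_sum_sub_sum_mul_sum_eq_sum_sdiff (hst : s ⊆ t) :
    (∑ j ∈ s, w j * L j) * (∑ j ∈ t, w j) - (∑ j ∈ s, w j) * ∑ j ∈ t, w j * L j =
      ∑ x ∈ s, ∑ y ∈ t \ s, w x * w y * (L x - L y) := by
  calc _ = (∑ x ∈ s, w x * L x) * (∑ y ∈ t \ s, w y)
          - (∑ x ∈ s, w x) * ∑ y ∈ t \ s, w y * L y := by
        rw [← sum_sdiff hst (f := w), ← sum_sdiff hst (f := fun j => w j * L j)]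
        ring
    _ = _ := by
        rw [sum_mul_sum, sum_mul_sum, ← sum_sub_distrib]
        refine sum_congr rfl fun x _ => ?_
        rw [← sum_sub_distrib]
        exact sum_congr rfl fun y _ => by ring

theorem abs_sum_mul_sum_sub_sum_mul_sum_le (hst : s ⊆ t) (hw : ∀ j ∈ t, 0 ≤ w j)
    {C : ℝ} (hC : 0 ≤ C) (hL : ∀ x ∈ s, ∀ y ∈ t \ s, |L x - L y| ≤ C) :
    |(∑ j ∈ s, w j * L j) * (∑ j ∈ t, w j) - (∑ j ∈ s, w j) * ∑ j ∈ t, w j * L j| ≤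
      C * (∑ j ∈ t, w j) ^ 2 := by
  have hwts : ∀ y ∈ t \ s, 0 ≤ w y := fun y hy => hw y (sdiff_subset hy)
  rw [sum_mul_sum_sub_sum_mul_sum_eq_sum_sdiff w L hst]
  calc |∑ x ∈ s, ∑ y ∈ t \ s, w x * w y * (L x - L y)|
      ≤ ∑ x ∈ s, ∑ y ∈ t \ s, w x * w y * C := by
        refine (abs_sum_le_sum_abs _ _).trans (sum_le_sum fun x hx => ?_)
        refine (abs_sum_le_sum_abs _ _).trans (sum_le_sum fun y hy => ?_)
        have hwxy : 0 ≤ w x * w y := mul_nonneg (hw x (hst hx)) (hwts y hy)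
        rw [abs_mul, abs_of_nonneg hwxy]
        exact mul_le_mul_of_nonneg_left (hL x hx y hy) hwxy
    _ = C * ((∑ x ∈ s, w x) * ∑ y ∈ t \ s, w y) := by
        rw [sum_mul_sum, mul_sum]
        exact sum_congr rfl fun x _ => by rw [mul_sum]; exact sum_congr rfl fun y _ => by ring
    _ ≤ C * (∑ j ∈ t, w j) ^ 2 := by
        have hA : 0 ≤ ∑ x ∈ s, w x := sum_nonneg fun x hx => hw x (hst hx)
        have hR : 0 ≤ ∑ y ∈ t \ s, w y := sum_nonneg hwts
        rw [← sum_sdiff hst]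
        gcongr
        nlinarith [mul_nonneg hA hR]

end WeightedSums

theorem hasDerivAt_sum_const_rpow {ι : Type*} (s : Finset ι) {d : ι → ℝ}
    (hd : ∀ j ∈ s, 0 < d j) (α : ℝ) :
    HasDerivAt (fun β => ∑ j ∈ s, d j ^ β) (∑ j ∈ s, d j ^ α * log (d j)) α :=
  HasDerivAt.fun_sum fun j hj => (hasStrictDerivAt_const_rpow (hd j hj) α).hasDerivAt

theorem abs_log_sub_log_le_log_first_div_last {n : ℕ} {d : ℕ → ℝ}
    (hpos : ∀ j, j < n → 0 < d j) (hsorted : ∀ j k, j ≤ k → k < n → d k ≤ d j)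
    {x y : ℕ} (hxy : x ≤ y) (hy : y < n) :
    |log (d x) - log (d y)| ≤ log (d 0 / d (n - 1)) := by
  have hxn : x < n := hxy.trans_lt hy
  have hlast : n - 1 < n := by omega
  rw [log_div (hpos 0 (by omega)).ne' (hpos _ hlast).ne',
    abs_of_nonneg (sub_nonneg.mpr (log_le_log (hpos y hy) (hsorted x y hxy hy)))]
  have hx0 : log (d x) ≤ log (d 0) := log_le_log (hpos x hxn) (hsorted 0 x x.zero_le hxn)
  have hyl : log (d (n - 1)) ≤ log (d y) :=
    log_le_log (hpos _ hlast) (hsorted y (n - 1) (by omega) hlast)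
  linarith

theorem stmt4_general (n : ℕ) (hn : 0 < n) (d : ℕ → ℝ)
    (hpos : ∀ j, j < n → 0 < d j)
    (hsorted : ∀ j k, j ≤ k → k < n → d k ≤ d j)
    (i : ℕ) (hi : i ≤ n) (α : ℝ) :
    |deriv (fun β : ℝ =>
        (∑ j ∈ Finset.range i, d j ^ β) / (∑ j ∈ Finset.range n, d j ^ β)) α|
      ≤ Real.log (d 0 / d (n - 1)) := by
  have hsub : range i ⊆ range n := range_subset_range.mpr hi
  have hd : ∀ j ∈ range n, 0 < d j := fun j hj => hpos j (mem_range.mp hj)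
  have hDn : 0 < ∑ j ∈ range n, d j ^ α :=
    sum_pos (fun j hj => rpow_pos_of_pos (hd j hj) α) (nonempty_range_iff.mpr hn.ne')
  have hderiv := (hasDerivAt_sum_const_rpow _ (fun j hj => hd j (hsub hj)) α).fun_div
    (hasDerivAt_sum_const_rpow _ hd α) hDn.ne'
  rw [hderiv.deriv, abs_div, abs_of_pos (pow_pos hDn 2), div_le_iff₀ (pow_pos hDn 2)]
  have hlog : ∀ x ∈ range i, ∀ y ∈ range n \ range i,
      |log (d x) - log (d y)| ≤ log (d 0 / d (n - 1)) := by
    intro x hx y hy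
    rw [mem_sdiff, mem_range, mem_range, not_lt] at hy
    exact abs_log_sub_log_le_log_first_div_last hpos hsorted
      ((mem_range.mp hx).le.trans hy.2) hy.1
  exact abs_sum_mul_sum_sub_sum_mul_sum_le (fun j => d j ^ α) (fun j => log (d j)) hsub
    (fun j hj => (rpow_pos_of_pos (hd j hj) α).le)
    ((abs_nonneg _).trans (abs_log_sub_log_le_log_first_div_last hpos hsorted le_rfl hn)) hlog

/-- The absolute value of the derivative of `α ↦ D_i(α)/D_n(α)` is at most
`ln(d_1/d_n)` (0-indexed: `ln (d 0 / d (n-1))`). -/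
theorem stmt4 (n : ℕ) (hn : 0 < n) (d : ℕ → ℝ)
    (hpos : ∀ j, j < n → 0 < d j)
    (hsorted : ∀ j k, j ≤ k → k < n → d k ≤ d j)
    (i : ℕ) (hi : i ≤ n) (α : ℝ) (hα : 0 < α) :
    |deriv (fun β : ℝ =>
        (∑ j ∈ Finset.range i, d j ^ β) / (∑ j ∈ Finset.range n, d j ^ β)) α|
      ≤ Real.log (d 0 / d (n - 1)) :=
  stmt4_general n hn d hpos hsorted i hi α
end

section
/- Let d_1 ≥ ... ≥ d_n > 0 and D_i(α) = Σ_{j=1}^i d_j^α. Then for every index i and every α > 0, the derivative of α ↦ D_i(α)/D_n(α) is at most (2/α)·ln n. -/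
/-!
Differentiating `A/B` with `A(α) = ∑_{j≤i} d_j^α`, `B(α) = ∑_{j≤n} d_j^α` gives the numerator
`A'B - AB' ≤ A · ∑_k d_k^α (log d_1 - log d_k)`, since `log d_j ≤ log d_1`. With `x_k = d_k^α`
the last sum is `(1/α) ∑_k x_k log (x_1/x_k)`. Splitting `log (x_1/x_k) = log (x_1/(n² x_k)) + 2 log n`
and using `x log (y/x) ≤ y - x` on the first part leaves an error of at most
`n · x_1/n² - ∑_k x_k ≤ 0`, so the sum is at most `2 log n ∑_k x_k`; finally `A ≤ B`.
-/

open Finset Real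

lemma mul_log_div_le_sub {x y : ℝ} (hx : 0 < x) (hy : 0 < y) : x * log (y / x) ≤ y - x := by
  have h := mul_le_mul_of_nonneg_left (log_le_sub_one_of_pos (div_pos hy hx)) hx.le
  rwa [mul_sub, mul_div_cancel₀ _ hx.ne', mul_one] at h

lemma sum_mul_log_div_le_two_mul_log_card {ι : Type*} {s : Finset ι} {x : ι → ℝ} {M : ℝ}
    (hx : ∀ k ∈ s, 0 < x k) (hM : 0 < M) (hMs : M ≤ ∑ k ∈ s, x k) :
    ∑ k ∈ s, x k * log (M / x k) ≤ 2 * log #s * ∑ k ∈ s, x k := by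
  have hcard : (1 : ℝ) ≤ #s := by
    have : s.Nonempty := by
      by_contra h
      rw [not_nonempty_iff_eq_empty.mp h, sum_empty] at hMs
      linarith
    exact_mod_cast this.card_pos
  have hc : (0 : ℝ) < (#s : ℝ) ^ 2 := by positivity
  have hterm : ∀ k ∈ s, x k * log (M / x k)
      ≤ (M / (#s : ℝ) ^ 2 - x k) + 2 * log #s * x k := by
    intro k hk
    have hsplit : log (M / x k) = log (M / (#s : ℝ) ^ 2 / x k) + 2 * log #s := by
      have hxk := hx k hk
      rw [div_div, log_div hM.ne' (mul_pos hc hxk).ne', log_mul hc.ne' hxk.ne', log_pow,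
        log_div hM.ne' hxk.ne']
      push_cast
      ring
    rw [hsplit, mul_add]
    linarith [mul_log_div_le_sub (hx k hk) (div_pos hM hc)]
  have hsmall : (#s : ℝ) * (M / (#s : ℝ) ^ 2) ≤ M := by
    rw [sq, ← div_div, mul_div_cancel₀ _ (by positivity)]
    exact div_le_self hM.le hcard
  calc ∑ k ∈ s, x k * log (M / x k)
      ≤ ∑ k ∈ s, ((M / (#s : ℝ) ^ 2 - x k) + 2 * log #s * x k) := sum_le_sum hterm
    _ = #s * (M / (#s : ℝ) ^ 2) - ∑ k ∈ s, x k + 2 * log #s * ∑ k ∈ s, x k := by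
      rw [sum_add_distrib, sum_sub_distrib, sum_const, nsmul_eq_mul, mul_sum]
    _ ≤ 2 * log #s * ∑ k ∈ s, x k := by linarith

lemma sum_rpow_mul_log_sub_le {ι : Type*} {s : Finset ι} {d : ι → ℝ} {m : ι}
    (hd : ∀ k ∈ s, 0 < d k) (hm : m ∈ s) {α : ℝ} (hα : 0 < α) :
    (∑ k ∈ s, d k ^ α) * log (d m) - ∑ k ∈ s, d k ^ α * log (d k)
      ≤ 2 / α * log #s * ∑ k ∈ s, d k ^ α := by
  have hdα : ∀ k ∈ s, 0 < d k ^ α := fun k hk => rpow_pos_of_pos (hd k hk) α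
  have hrewrite : (∑ k ∈ s, d k ^ α) * log (d m) - ∑ k ∈ s, d k ^ α * log (d k)
      = α⁻¹ * ∑ k ∈ s, d k ^ α * log (d m ^ α / d k ^ α) := by
    rw [sum_mul, ← sum_sub_distrib, mul_sum]
    refine sum_congr rfl fun k hk => ?_
    rw [log_div (hdα m hm).ne' (hdα k hk).ne', log_rpow (hd m hm), log_rpow (hd k hk)]
    field_simp
  have hbound := sum_mul_log_div_le_two_mul_log_card hdα (hdα m hm)
    (single_le_sum (fun k hk => (hdα k hk).le) hm)
  rw [hrewrite, div_eq_mul_inv, mul_comm 2, mul_assoc, mul_assoc]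
  exact mul_le_mul_of_nonneg_left (by linarith) (inv_nonneg.mpr hα.le)

lemma sum_mul_log_le_sum_mul_log_of_le {ι : Type*} {s : Finset ι} {w d : ι → ℝ} {M : ℝ}
    (hw : ∀ k ∈ s, 0 ≤ w k) (hd : ∀ k ∈ s, 0 < d k) (hdM : ∀ k ∈ s, d k ≤ M) :
    ∑ k ∈ s, w k * log (d k) ≤ (∑ k ∈ s, w k) * log M := by
  rw [sum_mul]
  exact sum_le_sum fun k hk => mul_le_mul_of_nonneg_left (log_le_log (hd k hk) (hdM k hk)) (hw k hk)

lemma hasDerivAt_sum_rpow {ι : Type*} {s : Finset ι} {d : ι → ℝ} (hd : ∀ k ∈ s, 0 < d k)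
    (α : ℝ) :
    HasDerivAt (fun β : ℝ => ∑ k ∈ s, d k ^ β) (∑ k ∈ s, d k ^ α * log (d k)) α :=
  HasDerivAt.fun_sum fun k hk => (hasStrictDerivAt_const_rpow (hd k hk) α).hasDerivAt

/-- The derivative of `α ↦ D_i(α)/D_n(α)` is at most `(2/α)·ln n`. -/
theorem stmt5 (n : ℕ) (hn : 2 ≤ n) (d : ℕ → ℝ)
    (hpos : ∀ j, j < n → 0 < d j)
    (hsorted : ∀ j k, j ≤ k → k < n → d k ≤ d j)
    (i : ℕ) (hi : i ≤ n) (α : ℝ) (hα : 0 < α) :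
    deriv (fun β : ℝ =>
        (∑ j ∈ Finset.range i, d j ^ β) / (∑ j ∈ Finset.range n, d j ^ β)) α
      ≤ 2 / α * Real.log n := by
  have hin : range i ⊆ range n := range_subset_range.mpr hi
  have hposn : ∀ j ∈ range n, 0 < d j := fun j hj => hpos j (mem_range.mp hj)
  have hposi : ∀ j ∈ range i, 0 < d j := fun j hj => hposn j (hin hj)
  have h0 : 0 ∈ range n := mem_range.mpr (by omega)
  set A := ∑ j ∈ range i, d j ^ α
  set B := ∑ j ∈ range n, d j ^ α
  have hB : 0 < B := sum_pos (fun j hj => rpow_pos_of_pos (hposn j hj) α) ⟨0, h0⟩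
  have hAB : A ≤ B := sum_le_sum_of_subset_of_nonneg hin
    fun j hj _ => (rpow_pos_of_pos (hposn j hj) α).le
  have hA' : ∑ j ∈ range i, d j ^ α * log (d j) ≤ A * log (d 0) :=
    sum_mul_log_le_sum_mul_log_of_le (fun j hj => (rpow_pos_of_pos (hposi j hj) α).le) hposi
      fun j hj => hsorted 0 j j.zero_le (mem_range.mp (hin hj))
  have hC := sum_rpow_mul_log_sub_le hposn h0 hα
  rw [card_range] at hC
  have hlog : 0 ≤ 2 / α * log n := by have := log_natCast_nonneg n; positivity
  rw [((hasDerivAt_sum_rpow hposi α).fun_div (hasDerivAt_sum_rpow hposn α) hB.ne').deriv,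
    div_le_iff₀ (pow_pos hB 2)]
  calc _ ≤ A * (B * log (d 0) - ∑ j ∈ range n, d j ^ α * log (d j)) := by
        linarith [mul_le_mul_of_nonneg_right hA' hB.le]
    _ ≤ A * (2 / α * log n * B) :=
        mul_le_mul_of_nonneg_left hC (sum_nonneg fun j hj => (rpow_pos_of_pos (hposi j hj) α).le)
    _ ≤ B * (2 / α * log n * B) := mul_le_mul_of_nonneg_right hAB (by positivity)
    _ = 2 / α * log n * B ^ 2 := by ring
end

section
/- Let d_1 ≥ ... ≥ d_n > 0, D_i(α) = Σ_{j=1}^i d_j^α, and 0 < α_ℓ < α_h. Then for every index i, D_i(α_h)/D_n(α_h) − D_i(α_ℓ)/D_n(α_ℓ) ≤ 2 ln(n)·(ln α_h − ln α_ℓ). -/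
/-!
Write `F(α) = D_i(α) / D_n(α)` and `q_j = d_j ^ α`, `Z = D_n(α)`. Since `log (q_j) = α log d_j`,
`α F'(α) Z²` equals `(∑_{j<i} q_j log q_j) Z - D_i(α) ∑_{j<n} q_j log q_j`. Each `q_j ≤ Z` bounds
the first sum by `D_i(α) log Z`, and Jensen's inequality for the convex function `x log x` bounds
the second from below by `Z log (Z / n)`; hence `F'(α) ≤ ln n / α`, and integrating
gives the claim even without the factor `2`.
-/

open Finset Real

theorem sub_le_mul_log_sub_log_of_hasDerivAt {f f' : ℝ → ℝ} {C a b : ℝ}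
    (hf : ∀ x, 0 < x → HasDerivAt f (f' x) x) (hf' : ∀ x, 0 < x → f' x ≤ C / x)
    (ha : 0 < a) (hab : a ≤ b) : f b - f a ≤ C * (log b - log a) := by
  have hG : ∀ x ∈ Set.Ioi (0 : ℝ), HasDerivAt (fun x => C * log x - f x) (C / x - f' x) x :=
    fun x hx => by
      simpa only [div_eq_mul_inv] using ((hasDerivAt_log hx.ne').const_mul C).fun_sub (hf x hx)
  have hmono : MonotoneOn (fun x => C * log x - f x) (Set.Ioi 0) := by
    refine monotoneOn_of_hasDerivWithinAt_nonneg (f' := fun x => C / x - f' x) (convex_Ioi 0)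
      (fun x hx => (hG x hx).continuousAt.continuousWithinAt) ?_ ?_ <;> rw [interior_Ioi]
    · exact fun x hx => (hG x hx).hasDerivWithinAt
    · exact fun x hx => sub_nonneg.2 (hf' x hx)
  have hGab : C * log a - f a ≤ C * log b - f b := hmono ha (ha.trans_le hab : (0 : ℝ) < b) hab
  linarith

section PowerSums

variable {ι : Type*} {s t : Finset ι}

theorem sum_mul_log_div_card_le_sum_mul_log {q : ι → ℝ} (hq : ∀ j ∈ t, 0 ≤ q j) :
    (∑ j ∈ t, q j) * log ((∑ j ∈ t, q j) / #t) ≤ ∑ j ∈ t, q j * log (q j) := by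
  rcases t.eq_empty_or_nonempty with rfl | ht
  · simp
  have hcard : (0 : ℝ) < #t := by exact_mod_cast ht.card_pos
  have hjensen := convexOn_mul_log.map_sum_le (t := t) (w := fun _ => (#t : ℝ)⁻¹) (p := q)
    (fun _ _ => by positivity) (by simp [hcard.ne']) hq
  simp only [smul_eq_mul, ← div_eq_inv_mul, ← sum_div] at hjensen
  rw [div_mul_eq_mul_div, div_le_div_iff_of_pos_right hcard] at hjensen
  exact hjensen

theorem sum_mul_log_mul_sum_sub_sum_mul_sum_mul_log_le (hst : s ⊆ t) {q : ι → ℝ}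
    (hq : ∀ j ∈ t, 0 < q j) :
    (∑ j ∈ s, q j * log (q j)) * (∑ j ∈ t, q j) - (∑ j ∈ s, q j) * (∑ j ∈ t, q j * log (q j))
      ≤ log #t * (∑ j ∈ t, q j) ^ 2 := by
  rcases t.eq_empty_or_nonempty with rfl | ht
  · simp [subset_empty.1 hst]
  set Z := ∑ j ∈ t, q j
  set P := ∑ j ∈ s, q j
  have hZ : 0 < Z := sum_pos hq ht
  have hP : 0 ≤ P := sum_nonneg fun j hj => (hq j (hst hj)).le
  have hPZ : P ≤ Z := sum_le_sum_of_subset_of_nonneg hst fun j hj _ => (hq j hj).le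
  have hlog_card : 0 ≤ log #t := log_natCast_nonneg _
  have hupper : ∑ j ∈ s, q j * log (q j) ≤ P * log Z := by
    rw [sum_mul]
    refine sum_le_sum fun j hj => ?_
    have hqj := hq j (hst hj)
    exact mul_le_mul_of_nonneg_left
      (log_le_log hqj (single_le_sum (fun k hk => (hq k hk).le) (hst hj))) hqj.le
  have hlower : Z * log Z - Z * log #t ≤ ∑ j ∈ t, q j * log (q j) := by
    have h := sum_mul_log_div_card_le_sum_mul_log fun j hj => (hq j hj).le
    rwa [log_div hZ.ne' (by exact_mod_cast ht.card_pos.ne'), mul_sub] at h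
  nlinarith [mul_le_mul_of_nonneg_right hupper hZ.le, mul_le_mul_of_nonneg_left hlower hP,
    mul_le_mul_of_nonneg_right hPZ (mul_nonneg hZ.le hlog_card)]

variable {w : ι → ℝ}

theorem hasDerivAt_sum_rpow_s7 (hw : ∀ j ∈ s, 0 < w j) (a : ℝ) :
    HasDerivAt (fun x => ∑ j ∈ s, w j ^ x) (∑ j ∈ s, w j ^ a * log (w j)) a :=
  HasDerivAt.fun_sum fun j hj => (hasStrictDerivAt_const_rpow (hw j hj) a).hasDerivAt

theorem sum_rpow_div_sum_rpow_sub_le (hst : s ⊆ t) (hw : ∀ j ∈ t, 0 < w j) (ht : t.Nonempty)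
    {a b : ℝ} (ha : 0 < a) (hab : a ≤ b) :
    (∑ j ∈ s, w j ^ b) / (∑ j ∈ t, w j ^ b) - (∑ j ∈ s, w j ^ a) / (∑ j ∈ t, w j ^ a)
      ≤ log #t * (log b - log a) := by
  have hZ : ∀ x : ℝ, 0 < ∑ j ∈ t, w j ^ x :=
    fun x => sum_pos (fun j hj => rpow_pos_of_pos (hw j hj) x) ht
  refine sub_le_mul_log_sub_log_of_hasDerivAt (fun x _ =>
    (hasDerivAt_sum_rpow_s7 (fun j hj => hw j (hst hj)) x).div (hasDerivAt_sum_rpow_s7 hw x)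
      (hZ x).ne') (fun x hx => ?_) ha hab
  have key := sum_mul_log_mul_sum_sub_sum_mul_sum_mul_log_le hst (q := fun j => w j ^ x)
    fun j hj => rpow_pos_of_pos (hw j hj) x
  have hlog : ∀ j ∈ t, w j ^ x * log (w j ^ x) = x * (w j ^ x * log (w j)) := fun j hj => by
    rw [log_rpow (hw j hj)]; ring
  rw [sum_congr rfl fun j hj => hlog j (hst hj), sum_congr rfl hlog, ← mul_sum, ← mul_sum] at key
  rw [div_le_div_iff₀ (pow_pos (hZ x) 2) hx]
  linarith

end PowerSums

theorem stmt7_general (n : ℕ) (hn : 2 ≤ n) (d : ℕ → ℝ)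
    (hpos : ∀ j, j < n → 0 < d j)
    (i : ℕ) (hi : i ≤ n) (αl αh : ℝ) (h0 : 0 < αl) (hlh : αl < αh) :
    (∑ j ∈ Finset.range i, d j ^ αh) / (∑ j ∈ Finset.range n, d j ^ αh)
      - (∑ j ∈ Finset.range i, d j ^ αl) / (∑ j ∈ Finset.range n, d j ^ αl)
      ≤ 2 * Real.log n * (Real.log αh - Real.log αl) := by
  have hlog_n : 0 ≤ log n := log_natCast_nonneg n
  have hlog_α : 0 ≤ log αh - log αl := sub_nonneg.2 (log_le_log h0 hlh.le)
  calc _ ≤ log #(range n) * (log αh - log αl) :=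
        sum_rpow_div_sum_rpow_sub_le (range_subset_range.2 hi)
          (fun j hj => hpos j (mem_range.1 hj)) (nonempty_range_iff.2 (by omega)) h0 hlh.le
    _ ≤ 2 * log n * (log αh - log αl) := by rw [card_range]; nlinarith

/-- For `0 < α_ℓ < α_h`, the increase of the normalized partial sum is at most
`2 ln(n) (ln α_h − ln α_ℓ)`. -/
theorem stmt7 (n : ℕ) (hn : 2 ≤ n) (d : ℕ → ℝ)
    (hpos : ∀ j, j < n → 0 < d j)
    (hsorted : ∀ j k, j ≤ k → k < n → d k ≤ d j)
    (i : ℕ) (hi : i ≤ n) (αl αh : ℝ) (h0 : 0 < αl) (hlh : αl < αh) :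
    (∑ j ∈ Finset.range i, d j ^ αh) / (∑ j ∈ Finset.range n, d j ^ αh)
      - (∑ j ∈ Finset.range i, d j ^ αl) / (∑ j ∈ Finset.range n, d j ^ αl)
      ≤ 2 * Real.log n * (Real.log αh - Real.log αl) :=
  stmt7_general n hn d hpos i hi αl αh h0 hlh
end

section
/- Let d_1 ≥ ... ≥ d_n > 0, D_i(α) = Σ_{j=1}^i d_j^α, and 0 ≤ α_ℓ < α_h. Then for every index i, D_i(α_h)/D_n(α_h) − D_i(α_ℓ)/D_n(α_ℓ) ≤ ln(d_1/d_n)·(α_h − α_ℓ). -/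
/-!
Writing `A_s = ∑_{j ∈ s} d_j ^ αh` and `B_s = ∑_{j ∈ s} d_j ^ αl`, the difference of the two
ratios is `(A_s B_t - A_t B_s) / (A_t B_t)` with `s = {j < i}` and `t = {j < n}`, and the
numerator is the sum of the cross terms `d_j^αh d_k^αl - d_k^αh d_j^αl` over `j ∈ s`, `k ∈ t \ s`.
Since `1 - e^{-u} ≤ u`, each cross term is at most `(αh - αl) log (d_j / d_k) d_j^αh d_k^αl`, and
`log (d_j / d_k) ≤ log (d_0 / d_{n-1})` by monotonicity.
-/

open Finset Real

lemma rpow_mul_rpow_sub_rpow_mul_rpow_le {x y : ℝ} (hx : 0 < x) (hy : 0 < y) (h l : ℝ) :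
    x ^ h * y ^ l - y ^ h * x ^ l ≤ (h - l) * log (x / y) * (x ^ h * y ^ l) := by
  simp only [rpow_def_of_pos hx, rpow_def_of_pos hy, log_div hx.ne' hy.ne', ← exp_add]
  set u := (h - l) * (log x - log y)
  have hswap : exp (log y * h + log x * l) = exp (log x * h + log y * l) * exp (-u) := by
    rw [← exp_add]; congr 1; ring
  have hexp : 1 - exp (-u) ≤ u := by linarith [add_one_le_exp (-u)]
  rw [hswap]
  nlinarith [exp_pos (log x * h + log y * l)]

lemma sum_mul_sum_sub_sum_mul_sum_of_subset {ι R : Type*} [DecidableEq ι] [CommRing R]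
    {s t : Finset ι} (hst : s ⊆ t) (a b : ι → R) :
    (∑ j ∈ s, a j) * (∑ k ∈ t, b k) - (∑ k ∈ t, a k) * (∑ j ∈ s, b j)
      = ∑ j ∈ s, ∑ k ∈ t \ s, (a j * b k - a k * b j) := by
  rw [← sum_sdiff hst (f := a), ← sum_sdiff hst (f := b)]
  simp_rw [sum_sub_distrib]
  rw [sum_comm (s := s) (t := t \ s) (f := fun j k => a k * b j),
    ← sum_mul_sum, ← sum_mul_sum]
  ring

lemma sum_div_sum_sub_sum_div_sum_le {ι K : Type*} [DecidableEq ι] [Field K] [LinearOrder K]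
    [IsStrictOrderedRing K] {s t : Finset ι} (hst : s ⊆ t) {a b : ι → K}
    (ha : ∀ j ∈ t, 0 ≤ a j) (hb : ∀ j ∈ t, 0 ≤ b j)
    (hA : 0 < ∑ j ∈ t, a j) (hB : 0 < ∑ j ∈ t, b j) {c : K} (hc : 0 ≤ c)
    (hcross : ∀ j ∈ s, ∀ k ∈ t \ s, a j * b k - a k * b j ≤ c * (a j * b k)) :
    (∑ j ∈ s, a j) / (∑ j ∈ t, a j) - (∑ j ∈ s, b j) / (∑ j ∈ t, b j) ≤ c := by
  rw [div_sub_div _ _ hA.ne' hB.ne', div_le_iff₀ (mul_pos hA hB),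
    sum_mul_sum_sub_sum_mul_sum_of_subset hst]
  calc ∑ j ∈ s, ∑ k ∈ t \ s, (a j * b k - a k * b j)
      ≤ ∑ j ∈ s, ∑ k ∈ t \ s, c * (a j * b k) :=
        sum_le_sum fun j hj => sum_le_sum fun k hk => hcross j hj k hk
    _ = c * ((∑ j ∈ s, a j) * ∑ k ∈ t \ s, b k) := by rw [sum_mul_sum]; simp_rw [mul_sum]
    _ ≤ c * ((∑ j ∈ t, a j) * ∑ k ∈ t, b k) := by
        gcongr c * ?_
        exact mul_le_mul (sum_le_sum_of_subset_of_nonneg hst fun j hj _ => ha j hj)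
          (sum_le_sum_of_subset_of_nonneg sdiff_subset fun k hk _ => hb k hk)
          (sum_nonneg fun k hk => hb k (sdiff_subset hk)) hA.le

lemma log_div_le_log_head_div_last {n : ℕ} {d : ℕ → ℝ} (hpos : ∀ j, j < n → 0 < d j)
    (hsorted : ∀ j k, j ≤ k → k < n → d k ≤ d j) {j k : ℕ} (hj : j < n) (hk : k < n) :
    log (d j / d k) ≤ log (d 0 / d (n - 1)) :=
  log_le_log (div_pos (hpos j hj) (hpos k hk))
    (div_le_div₀ (hpos 0 (by omega)).le (hsorted 0 j (by omega) hj) (hpos _ (by omega))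
      (hsorted k (n - 1) (by omega) (by omega)))

theorem stmt8_general (n : ℕ) (hn : 0 < n) (d : ℕ → ℝ)
    (hpos : ∀ j, j < n → 0 < d j)
    (hsorted : ∀ j k, j ≤ k → k < n → d k ≤ d j)
    (i : ℕ) (hi : i ≤ n) (αl αh : ℝ) (hlh : αl < αh) :
    (∑ j ∈ Finset.range i, d j ^ αh) / (∑ j ∈ Finset.range n, d j ^ αh)
      - (∑ j ∈ Finset.range i, d j ^ αl) / (∑ j ∈ Finset.range n, d j ^ αl)
      ≤ Real.log (d 0 / d (n - 1)) * (αh - αl) := by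
  have hlog_nonneg : 0 ≤ log (d 0 / d (n - 1)) := by
    simpa [div_self (hpos 0 hn).ne'] using log_div_le_log_head_div_last hpos hsorted hn hn
  have hsum_pos (α : ℝ) : 0 < ∑ j ∈ range n, d j ^ α :=
    sum_pos (fun j hj => rpow_pos_of_pos (hpos j (mem_range.mp hj)) α) ⟨0, mem_range.mpr hn⟩
  refine sum_div_sum_sub_sum_div_sum_le (range_subset_range.mpr hi)
    (fun j hj => (rpow_pos_of_pos (hpos j (mem_range.mp hj)) _).le)
    (fun j hj => (rpow_pos_of_pos (hpos j (mem_range.mp hj)) _).le)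
    (hsum_pos αh) (hsum_pos αl) (mul_nonneg hlog_nonneg (sub_nonneg.mpr hlh.le))
    fun j hj k hk => ?_
  have hkn : k < n := mem_range.mp (mem_sdiff.mp hk).1
  have hjn : j < n := (mem_range.mp hj).trans_le hi
  have hdj : 0 < d j := hpos j hjn
  have hdk : 0 < d k := hpos k hkn
  calc d j ^ αh * d k ^ αl - d k ^ αh * d j ^ αl
      ≤ (αh - αl) * log (d j / d k) * (d j ^ αh * d k ^ αl) :=
        rpow_mul_rpow_sub_rpow_mul_rpow_le hdj hdk αh αl
    _ ≤ log (d 0 / d (n - 1)) * (αh - αl) * (d j ^ αh * d k ^ αl) := by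
        rw [mul_comm (αh - αl)]
        gcongr ?_ * _ * _
        exact log_div_le_log_head_div_last hpos hsorted hjn hkn

/-- For `0 ≤ α_ℓ < α_h`, the increase of the normalized partial sum is at most
`ln(d_1/d_n)·(α_h − α_ℓ)` (0-indexed: `ln (d 0 / d (n-1))`). -/
theorem stmt8 (n : ℕ) (hn : 0 < n) (d : ℕ → ℝ)
    (hpos : ∀ j, j < n → 0 < d j)
    (hsorted : ∀ j k, j ≤ k → k < n → d k ≤ d j)
    (i : ℕ) (hi : i ≤ n) (αl αh : ℝ) (h0 : 0 ≤ αl) (hlh : αl < αh) :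
    (∑ j ∈ Finset.range i, d j ^ αh) / (∑ j ∈ Finset.range n, d j ^ αh)
      - (∑ j ∈ Finset.range i, d j ^ αl) / (∑ j ∈ Finset.range n, d j ^ αl)
      ≤ Real.log (d 0 / d (n - 1)) * (αh - αl) :=
  stmt8_general n hn d hpos hsorted i hi αl αh hlh
end

section
/- Fix a finite metric space on n points with a chosen number of clusters k, and suppose d^α-sampling is run with a fixed randomness vector Z ∈ [0,1]^k. Then the number of values of α ∈ [0,∞) at which the output sequence of centers changes (i.e., the number of discontinuities of α ↦ seed_α(V, Z)) is at most O(min(n^{k+3}, n² · 2^n)). -/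
/-!
Fix a round `t`, the set `C` of centers chosen before it and a candidate point `i`. Whether `i`
is chosen in round `t` is decided by the sign of `z · ∑ᵥ d(v,C)^β - ∑_{v ≤ i} d(v,C)^β`, an
exponential sum in `β` with at most `n` terms; by Rolle's theorem such a sum has fewer than `n`
zeros unless it vanishes identically. Near a discontinuity `α > 0` some other output `σ'` occurs
arbitrarily close to `α`; in the first round where `σ'` differs from the output at `α`, both
outputs see the same earlier centers, and letting `β → α` forces the sign function of `σ'` to
vanish at `α`. So every discontinuity is `0` or a zero of one of at most
`min(2ⁿ, nᵏ) · n` nondegenerate exponential sums.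
-/

open Finset

/-- Minimum distance from `v` to the centers chosen before round `t`. -/
noncomputable def dminC {n k : ℕ} (dist : Fin n → Fin n → ℝ) (σ : Fin k → Fin n)
    (t : Fin k) (v : Fin n) : ℝ :=
  sInf {r : ℝ | ∃ s : Fin k, s < t ∧ r = dist v (σ s)}

/-- Sampling weight of point `v` in round `t` of `d^α`-sampling (uniform in round 0). -/
noncomputable def wgt {n k : ℕ} (dist : Fin n → Fin n → ℝ) (σ : Fin k → Fin n)
    (α : ℝ) (t : Fin k) (v : Fin n) : ℝ :=
  if (t : ℕ) = 0 then 1 else dminC dist σ t v ^ α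

/-- `σ` is the sequence of centers output by the deterministic version of
`d^α`-sampling with randomness vector `Z`: in each round `t`, `[0,1]` is partitioned
into intervals with widths proportional to the weights, and the chosen center is the
point whose interval contains `Z t`. -/
def SeedSpec {n k : ℕ} (dist : Fin n → Fin n → ℝ) (α : ℝ) (Z : Fin k → ℝ)
    (σ : Fin k → Fin n) : Prop :=
  ∀ t : Fin k,
    (∑ j ∈ Finset.univ.filter (fun j => j < σ t), wgt dist σ α t j)
      ≤ Z t * ∑ j, wgt dist σ α t j ∧
    Z t * ∑ j, wgt dist σ α t j
      < ∑ j ∈ Finset.univ.filter (fun j => j ≤ σ t), wgt dist σ α t j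

open Real Filter Topology

theorem exists_finset_deriv_zeros_card_add_one_ge {f f' : ℝ → ℝ}
    (hf : ∀ x, HasDerivAt f (f' x) x) {s : Finset ℝ} (hs : ∀ x ∈ s, f x = 0) :
    ∃ t : Finset ℝ, (∀ x ∈ t, f' x = 0) ∧ s.card ≤ t.card + 1 := by
  classical
  have rolle : ∀ x ∈ s, ∀ y ∈ s, x < y → ∃ z ∈ Set.Ioo x y, f' z = 0 := fun x hx y hy hxy =>
    exists_hasDerivAt_eq_zero hxy
      (continuous_iff_continuousAt.2 fun z => (hf z).continuousAt).continuousOn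
      ((hs x hx).trans (hs y hy).symm) fun z _ => hf z
  choose! g hg_mem hg_zero using rolle
  refine ⟨((s ×ˢ s).filter fun p => p.1 < p.2).image fun p => g p.1 p.2, ?_, ?_⟩
  · simp only [Finset.forall_mem_image, Finset.mem_filter, Finset.mem_product]
    rintro ⟨x, y⟩ ⟨⟨hx, hy⟩, hxy⟩
    exact hg_zero x hx y hy hxy
  · refine Finset.card_le_of_interleaved fun x hx y hy hxy _ => ⟨g x y, ?_, hg_mem x hx y hy hxy⟩
    exact Finset.mem_image.2 ⟨(x, y), by simp [hx, hy, hxy], rfl⟩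

noncomputable def expSum {ι : Type*} (s : Finset ι) (c r : ι → ℝ) (x : ℝ) : ℝ :=
  ∑ i ∈ s, c i * exp (r i * x)

section expSum

variable {ι : Type*} (s : Finset ι) (c r : ι → ℝ)

theorem hasDerivAt_expSum (x : ℝ) :
    HasDerivAt (expSum s c r) (expSum s (fun i => c i * r i) r x) x := by
  unfold expSum
  refine HasDerivAt.fun_sum fun i _ => ?_
  have h := (((hasDerivAt_id' x).const_mul (r i)).exp).const_mul (c i)
  rw [mul_one] at h
  exact h.congr_deriv (by ring)

theorem expSum_mul_exp (a x : ℝ) :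
    expSum s c r x * exp (a * x) = expSum s c (fun i => r i + a) x := by
  simp only [expSum, Finset.sum_mul, mul_assoc, ← Real.exp_add, add_mul]

theorem card_lt_of_forall_expSum_eq_zero (hne : ∃ x, expSum s c r x ≠ 0) {R : Finset ℝ}
    (hR : ∀ x ∈ R, expSum s c r x = 0) : R.card < s.card := by
  classical
  induction s using Finset.induction_on generalizing c r R with
  | empty => simp [expSum] at hne
  | insert i₀ s hi₀ ih =>
    -- dividing by `exp (r i₀ x)` kills the `i₀`-th term of the derivative
    set r' : ι → ℝ := fun i => r i + -r i₀
    have hg_zero : ∀ x ∈ R, expSum (insert i₀ s) c r' x = 0 := fun x hx => by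
      rw [← expSum_mul_exp, hR x hx, zero_mul]
    have hg' : ∀ x, expSum (insert i₀ s) (fun i => c i * r' i) r' x
        = expSum s (fun i => c i * r' i) r' x := fun x => by
      simp [expSum, Finset.sum_insert hi₀, r']
    by_cases hconst : ∃ x, expSum s (fun i => c i * r' i) r' x ≠ 0
    · obtain ⟨t, ht, hRt⟩ := exists_finset_deriv_zeros_card_add_one_ge
        (fun x => (hasDerivAt_expSum _ c r' x).congr_deriv (hg' x)) hg_zero
      have := ih _ _ hconst ht
      rw [Finset.card_insert_of_notMem hi₀]
      omega
    · push Not at hconst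
      obtain ⟨x₀, hx₀⟩ := hne
      have hg_const : ∀ x, expSum (insert i₀ s) c r' x = expSum (insert i₀ s) c r' x₀ :=
        fun x => is_const_of_deriv_eq_zero
          (fun x => (hasDerivAt_expSum _ c r' x).differentiableAt)
          (fun x => by rw [(hasDerivAt_expSum _ c r' x).deriv, hg', hconst]) x x₀
      have hR_empty : R = ∅ := Finset.eq_empty_of_forall_notMem fun x hx => by
        refine hx₀ ?_
        have h := hg_zero x hx
        rw [hg_const, ← expSum_mul_exp] at h
        simpa [Real.exp_ne_zero] using h
      simp [hR_empty]

theorem encard_setOf_expSum_eq_zero_lt (hne : ∃ x, expSum s c r x ≠ 0) :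
    {x | expSum s c r x = 0}.encard < s.card := by
  by_cases hfin : {x | expSum s c r x = 0}.Finite
  · rw [← hfin.coe_toFinset, Set.encard_coe_eq_coe_finsetCard, Nat.cast_lt]
    exact card_lt_of_forall_expSum_eq_zero s c r hne fun x hx => by simpa using hx
  · obtain ⟨R, hR, hcard⟩ := Set.Infinite.exists_subset_card_eq hfin s.card
    exact absurd hcard (card_lt_of_forall_expSum_eq_zero s c r hne fun x hx => hR hx).ne

end expSum

section Selection

variable {ι : Type*} [Fintype ι] [LinearOrder ι]

def IsSelected (w : ι → ℝ) (x : ℝ) (i : ι) : Prop :=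
  ∑ j ∈ univ.filter (fun j => j < i), w j ≤ x ∧ x < ∑ j ∈ univ.filter (fun j => j ≤ i), w j

theorem sum_filter_le_eq_add (w : ι → ℝ) (i : ι) :
    ∑ j ∈ univ.filter (fun j => j ≤ i), w j = ∑ j ∈ univ.filter (fun j => j < i), w j + w i := by
  have : univ.filter (fun j => j ≤ i) = insert i (univ.filter (fun j => j < i)) := by
    ext j
    simp [le_iff_lt_or_eq, or_comm]
  rw [this, Finset.sum_insert (by simp), add_comm]

theorem sum_filter_le_le_sum_filter_lt {w : ι → ℝ} (hw : 0 ≤ w) {i j : ι} (hij : i < j) :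
    ∑ v ∈ univ.filter (fun v => v ≤ i), w v ≤ ∑ v ∈ univ.filter (fun v => v < j), w v :=
  Finset.sum_le_sum_of_subset_of_nonneg
    (fun v hv => by simpa using (Finset.mem_filter.1 hv).2.trans_lt hij) fun v _ _ => hw v

theorem IsSelected.pos {w : ι → ℝ} {x : ℝ} {i : ι} (h : IsSelected w x i) : 0 < w i := by
  have := h.1.trans_lt h.2
  rw [sum_filter_le_eq_add] at this
  linarith

theorem IsSelected.eq_sum_of_ne {w : ι → ℝ} (hw : 0 ≤ w) {x : ℝ} {i j : ι}
    (hi : IsSelected w x i) (hj₁ : ∑ v ∈ univ.filter (fun v => v < j), w v ≤ x)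
    (hj₂ : x ≤ ∑ v ∈ univ.filter (fun v => v ≤ j), w v) (hij : i ≠ j) :
    x = ∑ v ∈ univ.filter (fun v => v ≤ j), w v := by
  rcases hij.lt_or_gt with h | h
  · linarith [hi.2, sum_filter_le_le_sum_filter_lt hw h]
  · linarith [hi.1, sum_filter_le_le_sum_filter_lt hw h]

theorem IsSelected.unique {w : ι → ℝ} (hw : 0 ≤ w) {x : ℝ} {i j : ι}
    (hi : IsSelected w x i) (hj : IsSelected w x j) : i = j := by
  by_contra hij
  exact (hi.eq_sum_of_ne hw hj.1 hj.2.le hij).not_lt hj.2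

end Selection

section Seeding

variable {n k : ℕ} {dist : Fin n → Fin n → ℝ}

def centersBefore (σ : Fin k → Fin n) (t : Fin k) : Finset (Fin n) :=
  (univ.filter fun s => s < t).image σ

noncomputable def centerDist (dist : Fin n → Fin n → ℝ) (C : Finset (Fin n)) (v : Fin n) : ℝ :=
  sInf {r : ℝ | ∃ c ∈ C, r = dist v c}

theorem dminC_eq_centerDist (σ : Fin k → Fin n) (t : Fin k) (v : Fin n) :
    dminC dist σ t v = centerDist dist (centersBefore σ t) v := by
  simp [dminC, centerDist, centersBefore]

theorem centerDist_nonneg (hdist : ∀ u v, 0 ≤ dist u v) (C : Finset (Fin n)) (v : Fin n) :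
    0 ≤ centerDist dist C v :=
  Real.sInf_nonneg fun _ ⟨c, _, hr⟩ => hr ▸ hdist v c

theorem centerDist_eq_zero_of_mem (hdist : ∀ u v, 0 ≤ dist u v) (hself : ∀ v, dist v v = 0)
    {C : Finset (Fin n)} {v : Fin n} (hv : v ∈ C) : centerDist dist C v = 0 :=
  IsLeast.csInf_eq ⟨⟨v, hv, (hself v).symm⟩, fun _ ⟨c, _, hr⟩ => hr ▸ hdist v c⟩

theorem wgt_eq_centerDist_rpow (σ : Fin k → Fin n) (β : ℝ) {t : Fin k} (ht : (t : ℕ) ≠ 0) :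
    wgt dist σ β t = fun v => centerDist dist (centersBefore σ t) v ^ β := by
  ext v
  simp [wgt, ht, dminC_eq_centerDist]

theorem centersBefore_congr {σ σ' : Fin k → Fin n} {t : Fin k} (h : ∀ s < t, σ s = σ' s) :
    centersBefore σ t = centersBefore σ' t :=
  Finset.image_congr fun s hs => h s (Finset.mem_filter.1 hs).2

theorem card_centersBefore {σ : Fin k → Fin n} (hσ : Function.Injective σ) (t : Fin k) :
    (centersBefore σ t).card = t := by
  rw [centersBefore, Finset.card_image_of_injective _ hσ, Finset.filter_gt_eq_Iio, Fin.card_Iio]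

theorem SeedSpec.isSelected {α : ℝ} {Z : Fin k → ℝ} {σ : Fin k → Fin n}
    (h : SeedSpec dist α Z σ) (t : Fin k) :
    IsSelected (wgt dist σ α t) (Z t * ∑ v, wgt dist σ α t v) (σ t) :=
  h t

theorem SeedSpec.isSelected_centerDist {α : ℝ} {Z : Fin k → ℝ} {σ : Fin k → Fin n}
    (h : SeedSpec dist α Z σ) {t : Fin k} (ht : (t : ℕ) ≠ 0) :
    IsSelected (fun v => centerDist dist (centersBefore σ t) v ^ α)
      (Z t * ∑ v, centerDist dist (centersBefore σ t) v ^ α) (σ t) := by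
  simpa only [wgt_eq_centerDist_rpow σ α ht] using h.isSelected t

theorem SeedSpec.injective (hdist : ∀ u v, 0 ≤ dist u v) (hself : ∀ v, dist v v = 0)
    {α : ℝ} (hα : 0 < α) {Z : Fin k → ℝ} {σ : Fin k → Fin n} (h : SeedSpec dist α Z σ) :
    Function.Injective σ := by
  -- a repeated center has weight `0 ^ α = 0` in its second round, so it cannot be selected
  refine Function.Injective.of_lt_imp_ne fun s t hst hσ => ?_
  have ht : (t : ℕ) ≠ 0 := by have := Fin.lt_def.1 hst; omega
  have hmem : σ t ∈ centersBefore σ t := hσ ▸ Finset.mem_image_of_mem σ (by simpa using hst)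
  have hpos := (h.isSelected_centerDist ht).pos
  rw [centerDist_eq_zero_of_mem hdist hself hmem, Real.zero_rpow hα.ne'] at hpos
  exact lt_irrefl 0 hpos

theorem SeedSpec.apply_eq_of_val_eq_zero {α α' : ℝ} {Z : Fin k → ℝ} {σ σ' : Fin k → Fin n}
    (h : SeedSpec dist α Z σ) (h' : SeedSpec dist α' Z σ') {t : Fin k} (ht : (t : ℕ) = 0) :
    σ t = σ' t := by
  have hw : ∀ σ'' : Fin k → Fin n, ∀ β, wgt dist σ'' β t = fun _ => 1 := fun _ _ => by
    ext; simp [wgt, ht]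
  have hs := h.isSelected t
  have hs' := h'.isSelected t
  rw [hw] at hs hs'
  exact hs.unique (fun _ => zero_le_one) hs'

end Seeding

section Crossing

variable {ι : Type*} [Fintype ι] [LinearOrder ι]

noncomputable def crossing (z : ℝ) (d : ι → ℝ) (i : ι) (β : ℝ) : ℝ :=
  z * ∑ v, d v ^ β - ∑ v ∈ univ.filter (fun v => v ≤ i), d v ^ β

def crossingRoots (z : ℝ) (d : ι → ℝ) (i : ι) : Set ℝ :=
  {β | 0 < β ∧ crossing z d i β = 0 ∧ ∃ γ, 0 < γ ∧ crossing z d i γ ≠ 0}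

-- `log 0 = 0`, so points at distance `0` (whose weight `0 ^ β` vanishes) are dropped by hand
theorem crossing_eq_expSum (z : ℝ) {d : ι → ℝ} (hd : 0 ≤ d) (i : ι) {β : ℝ} (hβ : β ≠ 0) :
    crossing z d i β = expSum univ
      (fun v => if d v = 0 then 0 else z - if v ≤ i then 1 else 0) (fun v => log (d v)) β := by
  simp only [crossing, expSum, Finset.mul_sum, Finset.sum_filter, ← Finset.sum_sub_distrib]
  refine Finset.sum_congr rfl fun v _ => ?_
  rw [Real.rpow_def_of_nonneg (hd v)]
  split_ifs <;> simp_all [sub_mul, mul_comm]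

theorem encard_crossingRoots_le (z : ℝ) {d : ι → ℝ} (hd : 0 ≤ d) (i : ι) :
    (crossingRoots z d i).encard ≤ Fintype.card ι := by
  rcases (crossingRoots z d i).eq_empty_or_nonempty with h | ⟨_, -, -, γ, hγ, hγ_ne⟩
  · simp [h]
  rw [crossing_eq_expSum z hd i hγ.ne'] at hγ_ne
  have hsub : crossingRoots z d i ⊆ {x | expSum univ
      (fun v => if d v = 0 then 0 else z - if v ≤ i then 1 else 0) (fun v => log (d v)) x = 0} :=
    fun β ⟨hβ, hβ_root, _⟩ => (crossing_eq_expSum z hd i hβ.ne').symm.trans hβ_root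
  simpa using ((Set.encard_le_encard hsub).trans_lt
    (encard_setOf_expSum_eq_zero_lt _ _ _ ⟨γ, hγ_ne⟩)).le

theorem crossing_eq_zero_of_frequently_isSelected {z : ℝ} {d : ι → ℝ} (hd : 0 ≤ d)
    {i j : ι} (hij : i ≠ j) {α : ℝ} (hα : α ≠ 0)
    (hi : IsSelected (fun v => d v ^ α) (z * ∑ v, d v ^ α) i)
    (hj : ∃ᶠ β in 𝓝 α, IsSelected (fun v => d v ^ β) (z * ∑ v, d v ^ β) j) :
    crossing z d j α = 0 := by
  -- the non-strict selection inequalities for `j` survive in the limit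
  have hcont : ∀ s : Finset ι, ContinuousAt (fun β => ∑ v ∈ s, d v ^ β) α := fun s =>
    tendsto_finsetSum s fun v _ => Real.continuousAt_const_rpow' hα
  have hz := continuousAt_const (y := z) |>.mul (hcont univ)
  have hj₁ := le_of_tendsto_of_tendsto_of_frequently (hcont _) hz (hj.mono fun _ h => h.1)
  have hj₂ := le_of_tendsto_of_tendsto_of_frequently hz (hcont _) (hj.mono fun _ h => h.2.le)
  rw [crossing, sub_eq_zero]
  exact hi.eq_sum_of_ne (fun v => Real.rpow_nonneg (hd v) α) hj₁ hj₂ hij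

end Crossing

theorem Filter.exists_ne_frequently_eq_of_not_eventually {X β : Type*} [Finite β]
    {l : Filter X} {f : X → β} {a : β} (h : ¬ ∀ᶠ x in l, f x = a) :
    ∃ b ≠ a, ∃ᶠ x in l, f x = b := by
  rw [Filter.not_eventually] at h
  have h' : ∃ᶠ x in l, ∃ b : {b // b ≠ a}, f x = b := h.mono fun x hx => ⟨⟨f x, hx⟩, rfl⟩
  obtain ⟨⟨b, hb⟩, hfreq⟩ := Filter.frequently_exists.1 h'
  exact ⟨b, hb, hfreq⟩

theorem card_filter_card_lt_le_pow {α : Type*} [Fintype α] [DecidableEq α]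
    (hα : 2 ≤ Fintype.card α) (k : ℕ) :
    #(univ.filter fun C : Finset α => C.card < k) ≤ Fintype.card α ^ k :=
  calc #(univ.filter fun C : Finset α => C.card < k)
      ≤ #((range k).biUnion fun t => powersetCard t (univ : Finset α)) :=
        Finset.card_le_card fun C hC => by simpa using hC
    _ ≤ ∑ t ∈ range k, #(powersetCard t (univ : Finset α)) := Finset.card_biUnion_le
    _ ≤ ∑ t ∈ range k, Fintype.card α ^ t := Finset.sum_le_sum fun t _ => by
        simpa using Nat.choose_le_pow (Fintype.card α) t
    _ ≤ Fintype.card α ^ k := (Nat.geomSum_lt hα fun t ht => Finset.mem_range.1 ht).le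

-- triples (round `t`, centers chosen before round `t`, candidate point)
def roundStates (k n : ℕ) : Finset (Fin k × Finset (Fin n) × Fin n) :=
  univ.filter fun p => p.2.1.card = p.1

theorem card_roundStates_le (k n : ℕ) :
    #(roundStates k n) ≤ #(univ.filter fun C : Finset (Fin n) => C.card < k) * n :=
  calc #(roundStates k n)
      ≤ #((univ.filter fun C : Finset (Fin n) => C.card < k) ×ˢ (univ : Finset (Fin n))) :=
        Finset.card_le_card_of_injOn Prod.snd
          (fun p hp => by simp_all [roundStates])
          fun p hp q hq hpq => by
            simp only [roundStates, Finset.coe_filter, Finset.mem_univ, true_and,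
              Set.mem_ofPred_eq] at hp hq
            exact Prod.ext (Fin.ext (hp.symm.trans ((congrArg (·.1.card) hpq).trans hq))) hpq
    _ = #(univ.filter fun C : Finset (Fin n) => C.card < k) * n := by simp

section Discontinuities

variable {n k : ℕ} {dist : Fin n → Fin n → ℝ} {Z : Fin k → ℝ} {seedFun : ℝ → Fin k → Fin n}

theorem mem_crossingRoots_of_frequently_eq (hdist : ∀ u v, 0 ≤ dist u v)
    (hself : ∀ v, dist v v = 0) (hseed : ∀ α, 0 ≤ α → SeedSpec dist α Z (seedFun α))
    {α : ℝ} (hα : 0 < α) {σ' : Fin k → Fin n} (hne : σ' ≠ seedFun α)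
    (hfreq : ∃ᶠ β in 𝓝 α, seedFun β = σ' ∧ 0 < β) :
    ∃ p ∈ roundStates k n, α ∈ crossingRoots (Z p.1) (centerDist dist p.2.1) p.2.2 := by
  set σ := seedFun α
  obtain ⟨t, ht, hmin⟩ :=
    WellFounded.has_min wellFounded_lt {t | σ t ≠ σ' t} (Function.ne_iff.1 hne.symm)
  have hC : centersBefore σ t = centersBefore σ' t :=
    centersBefore_congr fun s hs => by_contra fun h => hmin s h hs
  obtain ⟨β₁, hσβ₁, hβ₁⟩ := hfreq.exists
  have hspec' : SeedSpec dist β₁ Z σ' := hσβ₁ ▸ hseed β₁ hβ₁.le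
  have ht0 : (t : ℕ) ≠ 0 := fun h0 => ht ((hseed α hα.le).apply_eq_of_val_eq_zero hspec' h0)
  refine ⟨(t, centersBefore σ' t, σ' t), ?_, hα, ?_, β₁, hβ₁, ?_⟩
  · simp [roundStates, card_centersBefore (hspec'.injective hdist hself hβ₁)]
  · have hsel := (hseed α hα.le).isSelected_centerDist ht0
    rw [hC] at hsel
    refine crossing_eq_zero_of_frequently_isSelected (centerDist_nonneg hdist _) ht hα.ne' hsel ?_
    exact hfreq.mono fun β ⟨hσβ, hβ⟩ => hσβ ▸ (hseed β hβ.le).isSelected_centerDist ht0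
  · have := (hspec'.isSelected_centerDist ht0).2
    rw [crossing]
    linarith

theorem discontinuities_subset_crossingRoots (hdist : ∀ u v, 0 ≤ dist u v)
    (hself : ∀ v, dist v v = 0) (hseed : ∀ α, 0 ≤ α → SeedSpec dist α Z (seedFun α)) :
    {α : ℝ | 0 ≤ α ∧ ¬ ∃ ε > (0:ℝ), ∀ α' ∈ Set.Ioo (α - ε) (α + ε), seedFun α' = seedFun α}
      ⊆ insert 0 (⋃ p ∈ roundStates k n, crossingRoots (Z p.1) (centerDist dist p.2.1) p.2.2) := by
  rintro α ⟨hα0, hdisc⟩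
  rcases hα0.eq_or_lt with rfl | hα
  · exact Set.mem_insert _ _
  have hnot : ¬ ∀ᶠ α' in 𝓝 α, seedFun α' = seedFun α := by
    simpa only [Metric.eventually_nhds_iff_ball, Real.ball_eq_Ioo] using hdisc
  obtain ⟨σ', hne, hfreq⟩ := Filter.exists_ne_frequently_eq_of_not_eventually hnot
  obtain ⟨p, hp, hmem⟩ := mem_crossingRoots_of_frequently_eq hdist hself hseed hα hne
    (hfreq.and_eventually (Ioi_mem_nhds hα))
  exact Set.mem_insert_of_mem _ (Set.mem_biUnion hp hmem)

theorem ncard_discontinuities_le (hdist : ∀ u v, 0 ≤ dist u v)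
    (hself : ∀ v, dist v v = 0) (hseed : ∀ α, 0 ≤ α → SeedSpec dist α Z (seedFun α)) :
    {α : ℝ | 0 ≤ α ∧ ¬ ∃ ε > (0:ℝ), ∀ α' ∈ Set.Ioo (α - ε) (α + ε), seedFun α' = seedFun α}.ncard
      ≤ #(univ.filter fun C : Finset (Fin n) => C.card < k) * n * n + 1 := by
  refine (Set.encard_le_coe_iff_finite_ncard_le.1 ?_).2
  calc _ ≤ (insert 0 (⋃ p ∈ roundStates k n,
          crossingRoots (Z p.1) (centerDist dist p.2.1) p.2.2)).encard :=
        Set.encard_le_encard (discontinuities_subset_crossingRoots hdist hself hseed)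
    _ ≤ (∑ p ∈ roundStates k n,
          (crossingRoots (Z p.1) (centerDist dist p.2.1) p.2.2).encard) + 1 :=
        (Set.encard_insert_le _ _).trans (by gcongr; exact Finset.set_encard_biUnion_le _ _)
    _ ≤ (∑ _p ∈ roundStates k n, (n : ℕ∞)) + 1 := by
        gcongr with p
        simpa using encard_crossingRoots_le _ (centerDist_nonneg hdist _) _
    _ = ↑(#(roundStates k n) * n + 1) := by simp
    _ ≤ _ := by
        exact_mod_cast Nat.add_le_add_right (Nat.mul_le_mul_right n (card_roundStates_le k n)) 1

end Discontinuities

/-- Combinatorial bound: for a fixed clustering instance on `n` points and fixed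
randomness `Z ∈ [0,1]^k`, the number of values of `α ∈ [0,∞)` at which the output
of `d^α`-sampling changes is `O(min(n^{k+3}, n²·2^n))`. -/
theorem stmt10 :
    ∃ Cst : ℝ, 0 < Cst ∧
      ∀ (n k : ℕ) (dist : Fin n → Fin n → ℝ) (Z : Fin k → ℝ),
        (∀ i j, dist i j = dist j i) →
        (∀ i, dist i i = 0) →
        (∀ i j, i ≠ j → 0 < dist i j) →
        (∀ t, Z t ∈ Set.Icc (0:ℝ) 1) →
        ∀ seedFun : ℝ → Fin k → Fin n,
          (∀ α : ℝ, 0 ≤ α → SeedSpec dist α Z (seedFun α)) →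
          (({α : ℝ | 0 ≤ α ∧
              ¬ ∃ ε > (0:ℝ), ∀ α' ∈ Set.Ioo (α - ε) (α + ε),
                seedFun α' = seedFun α}.ncard : ℝ))
            ≤ Cst * min ((n : ℝ) ^ (k + 3)) ((n : ℝ) ^ 2 * 2 ^ n) := by
  refine ⟨2, two_pos, fun n k dist Z _ hself hpos _ seedFun hseed => ?_⟩
  set S := {α : ℝ | 0 ≤ α ∧
    ¬ ∃ ε > (0:ℝ), ∀ α' ∈ Set.Ioo (α - ε) (α + ε), seedFun α' = seedFun α}
  rcases lt_or_ge n 2 with hn | hn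
  · have : Subsingleton (Fin n) := Fin.subsingleton_iff_le_one.2 (by omega)
    have hS : S = ∅ := Set.eq_empty_of_forall_notMem fun α hα =>
      hα.2 ⟨1, one_pos, fun _ _ => Subsingleton.elim _ _⟩
    rw [hS, Set.ncard_empty, Nat.cast_zero]
    positivity
  have hdist : ∀ u v, 0 ≤ dist u v := fun u v =>
    (eq_or_ne u v).elim (fun h => h ▸ (hself u).ge) fun h => (hpos u v h).le
  set N := #(univ.filter fun C : Finset (Fin n) => C.card < k)
  have hS : S.ncard ≤ N * n * n + 1 := ncard_discontinuities_le hdist hself hseed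
  have hbound : ∀ M, N ≤ M → 1 ≤ M → (S.ncard : ℝ) ≤ 2 * (M * n ^ 2) := fun M hNM hM => by
    have h1 : N * n * n ≤ M * n ^ 2 := by rw [sq, ← mul_assoc]; gcongr
    have h2 : 1 ≤ M * n ^ 2 := Nat.one_le_iff_ne_zero.2 (by positivity)
    exact_mod_cast (show S.ncard ≤ 2 * (M * n ^ 2) by omega)
  have hN2 : N ≤ 2 ^ n := (Finset.card_filter_le _ _).trans (by simp [Fintype.card_finset])
  have hNk : N ≤ n ^ k := by simpa using card_filter_card_lt_le_pow (α := Fin n) (by simpa) k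
  rw [mul_min_of_nonneg _ _ zero_le_two, le_min_iff]
  constructor
  · calc (S.ncard : ℝ)
        ≤ 2 * (((n ^ (k + 1) : ℕ) : ℝ) * (n : ℝ) ^ 2) :=
          hbound _ (hNk.trans (Nat.pow_le_pow_right (by omega) k.le_succ))
            (Nat.one_le_pow _ _ (by omega))
      _ = 2 * (n : ℝ) ^ (k + 3) := by push_cast; ring
  · calc (S.ncard : ℝ)
        ≤ 2 * (((2 ^ n : ℕ) : ℝ) * (n : ℝ) ^ 2) := hbound _ hN2 Nat.one_le_two_pow
      _ = 2 * ((n : ℝ) ^ 2 * 2 ^ n) := by push_cast; ring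
end

section
/- Let a clustering instance with k optimal clusters satisfy (1+c)-separation with witness radius r = 1 (all intra-cluster distances < 1, all inter-cluster distances > 1+c). Suppose the current centers C each lie in distinct optimal clusters, t − 1 = |C| < k. Then under d^α-sampling, the probability that the next chosen center lies in a cluster already containing a center is at most tn/(tn + (1+c)^α). -/
/-!
Every point of an already-represented cluster lies within distance `1` of a center, so it
carries `d^α`-weight at most `1`, and there are at most `n ≤ t n` such points. Since fewer than
`k` clusters are represented, some point lies in an unrepresented cluster; it is farther than
`1 + c` from every center and so carries weight at least `(1 + c)^α`. The ratio `N / (N + R)`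
of represented weight to total weight is increasing in `N` and decreasing in `R`.
-/

open Finset

theorem div_add_le_div_add {N R m q : ℝ} (hN : 0 ≤ N) (hNm : N ≤ m) (hq : 0 < q)
    (hqR : q ≤ R) : N / (N + R) ≤ m / (m + q) := by
  rw [div_le_div_iff₀ (by linarith) (by linarith)]
  nlinarith

theorem sum_filter_div_sum_le {ι : Type*} [Fintype ι] (p : ι → Prop) [DecidablePred p]
    {f : ι → ℝ} {m q : ℝ} (hf : ∀ i, 0 ≤ f i) (hp : ∀ i, p i → f i ≤ 1)
    (hm : (#(univ.filter p) : ℝ) ≤ m) (hq : 0 < q) {j : ι} (hj : ¬ p j) (hqj : q ≤ f j) :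
    (∑ i ∈ univ.filter p, f i) / ∑ i, f i ≤ m / (m + q) := by
  rw [← sum_filter_add_sum_filter_not univ p f]
  apply div_add_le_div_add (sum_nonneg fun i _ => hf i) _ hq
  · exact hqj.trans (single_le_sum (fun i _ => hf i) (by simpa using hj))
  · calc ∑ i ∈ univ.filter p, f i ≤ ∑ _i ∈ univ.filter p, (1 : ℝ) :=
          sum_le_sum fun i hi => hp i (mem_filter.mp hi).2
      _ = #(univ.filter p) := by simp
      _ ≤ m := hm

theorem exists_label_notMem_image {V L : Type*} [Fintype L] [DecidableEq L] (lab : V → L)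
    (S : Finset V) (hS : #S < Fintype.card L) : ∃ ℓ, ℓ ∉ S.image lab :=
  have hlt : #(S.image lab) < #(univ : Finset L) := card_image_le.trans_lt hS
  let ⟨ℓ, _, hℓ⟩ := exists_mem_notMem_of_card_lt_card hlt
  ⟨ℓ, hℓ⟩

theorem inf'_rpow_le_one {V : Type*} {S : Finset V} (hS : S.Nonempty) {d : V → ℝ}
    (hd : ∀ s, 0 ≤ d s) {s : V} (hs : s ∈ S) (hds : d s < 1) {α : ℝ} (hα : 0 ≤ α) :
    S.inf' hS d ^ α ≤ 1 :=
  Real.rpow_le_one (le_inf' hS _ fun s _ => hd s) ((inf'_le d hs).trans_lt hds).le hα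

theorem rpow_le_inf'_rpow {V : Type*} {S : Finset V} (hS : S.Nonempty) {d : V → ℝ} {r : ℝ}
    (hr : 0 ≤ r) (hd : ∀ s ∈ S, r < d s) {α : ℝ} (hα : 0 ≤ α) :
    r ^ α ≤ S.inf' hS d ^ α :=
  Real.rpow_le_rpow hr (le_inf' hS _ fun s hs => (hd s hs).le) hα

theorem stmt13_general (n k : ℕ) (dist : Fin n → Fin n → ℝ)
    (lab : Fin n → Fin k) (c : ℝ) (hc : 0 < c)
    (hd0 : ∀ u v, 0 ≤ dist u v)
    (hintra : ∀ u v, lab u = lab v → dist u v < 1)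
    (hinter : ∀ u v, lab u ≠ lab v → 1 + c < dist u v)
    (hsurj : Function.Surjective lab)
    (S : Finset (Fin n)) (hS : S.Nonempty)
    (t : ℕ) (ht1 : 1 ≤ t) (htcard : S.card = t - 1) (htk : t - 1 < k)
    (α : ℝ) (hα : 0 ≤ α) :
    (∑ u ∈ Finset.univ.filter (fun u => ∃ s ∈ S, lab u = lab s),
        (S.inf' hS (dist u)) ^ α) /
      (∑ u, (S.inf' hS (dist u)) ^ α)
      ≤ (t * n : ℝ) / (t * n + (1 + c) ^ α) := by
  obtain ⟨ℓ, hℓ⟩ := exists_label_notMem_image lab S (by simpa [htcard] using htk)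
  obtain ⟨u₀, rfl⟩ := hsurj ℓ
  have hu₀ : ¬ ∃ s ∈ S, lab u₀ = lab s := fun ⟨s, hs, h⟩ => hℓ (mem_image.mpr ⟨s, hs, h.symm⟩)
  have hcard : (#(univ.filter fun u => ∃ s ∈ S, lab u = lab s) : ℝ) ≤ t * n := by
    have hA : #(univ.filter fun u => ∃ s ∈ S, lab u = lab s) ≤ n :=
      (card_filter_le _ _).trans (by simp)
    have ht : (1 : ℝ) ≤ t := by exact_mod_cast ht1
    calc (#(univ.filter fun u => ∃ s ∈ S, lab u = lab s) : ℝ) ≤ n := by exact_mod_cast hA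
      _ ≤ t * n := le_mul_of_one_le_left (Nat.cast_nonneg n) ht
  refine sum_filter_div_sum_le _ (fun u => Real.rpow_nonneg (le_inf' hS _ fun s _ => hd0 u s) α)
    ?_ hcard (Real.rpow_pos_of_pos (by linarith) α) hu₀ ?_
  · rintro u ⟨s, hs, hus⟩
    exact inf'_rpow_le_one hS (hd0 u) hs (hintra u s hus) hα
  · refine rpow_le_inf'_rpow hS (by linarith) (fun s hs => hinter u₀ s ?_) hα
    exact fun h => hu₀ ⟨s, hs, h⟩

/-- Under `(1+c)`-separation (intra-cluster distances `< 1`, inter-cluster distances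
`> 1+c`), if the current centers `S` lie in distinct optimal clusters with
`|S| = t − 1 < k`, then the `d^α`-sampling probability that the next center lies in
an already-represented cluster is at most `t·n / (t·n + (1+c)^α)`. -/
theorem stmt13 (n k : ℕ) (dist : Fin n → Fin n → ℝ)
    (lab : Fin n → Fin k) (c : ℝ) (hc : 0 < c)
    (hd0 : ∀ u v, 0 ≤ dist u v)
    (hintra : ∀ u v, lab u = lab v → dist u v < 1)
    (hinter : ∀ u v, lab u ≠ lab v → 1 + c < dist u v)
    (hsurj : Function.Surjective lab)
    (S : Finset (Fin n)) (hS : S.Nonempty)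
    (hSdist : ∀ a ∈ S, ∀ b ∈ S, a ≠ b → lab a ≠ lab b)
    (t : ℕ) (ht1 : 1 ≤ t) (htcard : S.card = t - 1) (htk : t - 1 < k)
    (α : ℝ) (hα : 0 ≤ α) :
    (∑ u ∈ Finset.univ.filter (fun u => ∃ s ∈ S, lab u = lab s),
        (S.inf' hS (dist u)) ^ α) /
      (∑ u, (S.inf' hS (dist u)) ^ α)
      ≤ (t * n : ℝ) / (t * n + (1 + c) ^ α) :=
  stmt13_general n k dist lab c hc hd0 hintra hinter hsurj S hS t ht1 htcard htk α hα
end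

section
/- Fix a round of d^α-sampling with distances d_1 ≥ ... ≥ d_n > 0 and partial sums D_i(α) = Σ_{j=1}^i d_j^α. For z drawn uniformly from [0,1] and parameters 0 < α_ℓ < α_{ℓ+1}, let x(z) be the minimal index with D_x(α_ℓ)/D_n(α_ℓ) > z and y(z) the minimal index with D_y(α_{ℓ+1})/D_n(α_{ℓ+1}) > z. Then E_z[x(z) − y(z)] ≤ 4 n ln(n) (ln α_{ℓ+1} − ln α_ℓ). -/
/-!
Write `F_α(i) = D_i(α) / D_n(α)`. For `z ∈ [0, 1)` the index `x z` is `#{i < n | F_{α_ℓ}(i) ≤ z}`,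
so `∫₀¹ x = ∑_{i<n} (1 - F_{α_ℓ}(i))`; likewise for `y`, and the expectation becomes
`∑_{i<n} (F_{α_h}(i) - F_{α_ℓ}(i))`. In the variable `τ = log α` the derivative of `F_{e^τ}(i)` is
`∑_{j<i≤k} p_j p_k (log p_j - log p_k)` for the normalised weights `p = d^α / D_n(α)`. Since
`log p_j ≤ 0`, it is at most `∑_k p_k log (1 / p_k) ≤ 1/e + log n ≤ 2 log n` (tangent line of `log`
at `e n`), and the mean value theorem bounds each summand by `2 log n (log α_h - log α_ℓ)`.
-/

open Finset MeasureTheory Real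

lemma monotone_ite_le (c : ℝ) : Monotone fun z : ℝ => if c ≤ z then (1:ℝ) else 0 := by
  intro a b hab
  dsimp only
  split_ifs with ha hb <;> norm_num
  exact hb (ha.trans hab)

lemma intervalIntegral_ite_le {c : ℝ} (hc : c ∈ Set.Icc 0 1) :
    ∫ z in (0:ℝ)..1, (if c ≤ z then (1:ℝ) else 0) = 1 - c := by
  have hae : ∀ᵐ z, z ∈ Set.uIoc (0:ℝ) 1 →
      (if c ≤ z then (1:ℝ) else 0) = (Set.Ioc c 1).indicator 1 z := by
    filter_upwards [Measure.ae_ne volume c] with z hzc hz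
    rw [Set.uIoc_of_le zero_le_one] at hz
    by_cases hcz : c ≤ z
    · simp [hcz, lt_of_le_of_ne hcz (Ne.symm hzc), hz.2]
    · simp [hcz, not_lt.mpr (not_le.mp hcz).le]
  rw [intervalIntegral.integral_congr_ae hae, intervalIntegral.integral_of_le zero_le_one,
    integral_indicator_one measurableSet_Ioc, measureReal_restrict_apply measurableSet_Ioc,
    Set.inter_eq_left.mpr (Set.Ioc_subset_Ioc_left hc.1), Real.volume_real_Ioc_of_le hc.2]

lemma monotone_card_filter_le (F : ℕ → ℝ) (n : ℕ) :
    Monotone fun z : ℝ => (#{i ∈ range n | F i ≤ z} : ℝ) := fun _ _ h =>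
  Nat.cast_le.mpr <| card_le_card <| monotone_filter_right _ fun _ _ hi => hi.trans h

lemma intervalIntegral_card_filter_le {F : ℕ → ℝ} {n : ℕ}
    (hF : ∀ i < n, F i ∈ Set.Icc 0 1) :
    ∫ z in (0:ℝ)..1, (#{i ∈ range n | F i ≤ z} : ℝ) = ∑ i ∈ range n, (1 - F i) := by
  simp_rw [natCast_card_filter]
  rw [intervalIntegral.integral_finsetSum fun i _ => (monotone_ite_le (F i)).intervalIntegrable]
  exact sum_congr rfl fun i hi => intervalIntegral_ite_le (hF i (mem_range.mp hi))

lemma card_filter_le_eq_of_isLeast {F : ℕ → ℝ} {n m : ℕ} {z : ℝ}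
    (hF : MonotoneOn F (Set.Iic n)) (hzn : z < F n) (hm : z < F m) (hlt : ∀ i < m, F i ≤ z) :
    #{i ∈ range n | F i ≤ z} = m := by
  have hmn : m ≤ n := by
    by_contra! h
    exact (hlt n h).not_gt hzn
  have hiff : ∀ i ∈ range n, F i ≤ z ↔ i < m := fun i hi =>
    ⟨fun hFi => by_contra fun h => ((hF (Set.mem_Iic.mpr hmn)
      (Set.mem_Iic.mpr (mem_range.mp hi).le) (not_lt.mp h)).trans hFi).not_gt hm, hlt i⟩
  rw [filter_congr hiff]
  convert card_range m using 2
  ext i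
  simp only [mem_filter, mem_range]
  omega

lemma monotoneOn_sum_range_div {v : ℕ → ℝ} {n : ℕ} (hv : ∀ j < n, 0 ≤ v j) :
    MonotoneOn (fun i => (∑ j ∈ range i, v j) / ∑ j ∈ range n, v j) (Set.Iic n) :=
  fun _ _ _ hb hab => div_le_div_of_nonneg_right
    (sum_le_sum_of_subset_of_nonneg (range_subset_range.mpr hab)
      fun j hj _ => hv j ((mem_range.mp hj).trans_le hb))
    (sum_nonneg fun j hj => hv j (mem_range.mp hj))

lemma intervalIntegral_eq_sum_of_isLeast {F : ℕ → ℝ} {n : ℕ} (hF : MonotoneOn F (Set.Iic n))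
    (hF₀ : 0 ≤ F 0) (hFn : F n = 1) {m : ℝ → ℕ}
    (hm : ∀ z ∈ Set.Ico (0:ℝ) 1, z < F (m z) ∧ ∀ i < m z, F i ≤ z) :
    IntervalIntegrable (fun z => (m z : ℝ)) volume 0 1 ∧
      ∫ z in (0:ℝ)..1, (m z : ℝ) = ∑ i ∈ range n, (1 - F i) := by
  have hae : ∀ᵐ z, z ∈ Set.uIoc (0:ℝ) 1 → (#{i ∈ range n | F i ≤ z} : ℝ) = m z := by
    filter_upwards [Measure.ae_ne volume 1] with z hz₁ hz
    rw [Set.uIoc_of_le zero_le_one] at hz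
    obtain ⟨hzm, hlt⟩ := hm z ⟨hz.1.le, lt_of_le_of_ne hz.2 hz₁⟩
    rw [card_filter_le_eq_of_isLeast hF (hFn ▸ lt_of_le_of_ne hz.2 hz₁) hzm hlt]
  have hF01 : ∀ i < n, F i ∈ Set.Icc 0 1 := fun i hi =>
    ⟨hF₀.trans (hF (by simp) (by simp [hi.le]) (Nat.zero_le i)),
      hFn ▸ hF (by simp [hi.le]) (by simp) hi.le⟩
  refine ⟨(monotone_card_filter_le F n).intervalIntegrable.congr_ae
    ((ae_restrict_iff' measurableSet_uIoc).mpr hae), ?_⟩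
  rw [← intervalIntegral.integral_congr_ae hae, intervalIntegral_card_filter_le hF01]

section LogDerivative

variable {ι : Type*} {s t u : Finset ι} {v w : ι → ℝ}

lemma log_le_div_add_log {x m : ℝ} (hx : 0 < x) (hm : 0 < m) :
    log x ≤ x / (exp 1 * m) + log m := by
  have h := log_le_sub_one_of_pos (div_pos hx (mul_pos (exp_pos 1) hm))
  rw [log_div hx.ne' (by positivity), log_mul (exp_pos 1).ne' hm.ne', log_exp] at h
  linarith

lemma sum_mul_log_div_le {A m : ℝ} (hv : ∀ j ∈ u, 0 < v j) (hA : 0 < A) (hm : 0 < m) :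
    ∑ j ∈ u, v j * log (A / v j) ≤ #u * A / (exp 1 * m) + (∑ j ∈ u, v j) * log m := by
  calc ∑ j ∈ u, v j * log (A / v j)
      ≤ ∑ j ∈ u, (A / (exp 1 * m) + v j * log m) := by
        refine sum_le_sum fun j hj => ?_
        have hvj := hv j hj
        calc v j * log (A / v j) ≤ v j * (A / v j / (exp 1 * m) + log m) :=
              mul_le_mul_of_nonneg_left (log_le_div_add_log (div_pos hA hvj) hm) hvj.le
          _ = A / (exp 1 * m) + v j * log m := by field_simp
    _ = #u * A / (exp 1 * m) + (∑ j ∈ u, v j) * log m := by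
        rw [sum_add_distrib, sum_const, nsmul_eq_mul, sum_mul]
        ring

lemma sum_mul_log_mul_sum_sub_le [DecidableEq ι] (hst : s ⊆ t) (ht : 2 ≤ #t)
    (hv : ∀ j ∈ t, 0 < v j) :
    (∑ j ∈ s, v j * log (v j)) * (∑ j ∈ t, v j)
        - (∑ j ∈ s, v j) * (∑ j ∈ t, v j * log (v j))
      ≤ 2 * log #t * (∑ j ∈ t, v j) ^ 2 := by
  set A := ∑ j ∈ t, v j
  set B := ∑ j ∈ s, v j
  set C := ∑ j ∈ t \ s, v j
  have hvs : ∀ j ∈ s, 0 < v j := fun j hj => hv j (hst hj)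
  have hvc : ∀ j ∈ t \ s, 0 < v j := fun j hj => hv j (sdiff_subset hj)
  have hA : 0 < A := sum_pos hv (card_pos.mp (by omega))
  have hB : 0 ≤ B := sum_nonneg fun j hj => (hvs j hj).le
  have hC : 0 ≤ C := sum_nonneg fun j hj => (hvc j hj).le
  have hCBA : C + B = A := sum_sdiff hst
  have hlogN₀ : 0 ≤ log #t := log_nonneg (by exact_mod_cast (by omega : 1 ≤ #t))
  have hlogN : (exp 1)⁻¹ ≤ log #t := by
    have h2 : log 2 ≤ log #t := log_le_log two_pos (by exact_mod_cast ht)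
    have he : (exp 1)⁻¹ < 1 / 2 := by
      rw [inv_lt_comm₀ (exp_pos 1) (by norm_num)]
      linarith [exp_one_gt_d9]
    linarith [log_two_gt_d9]
  -- Centre the logarithms at `log A`: the `s`-part becomes nonpositive, the rest an entropy.
  have hcentre : (∑ j ∈ s, v j * log (v j)) * A - B * (∑ j ∈ t, v j * log (v j))
      = C * ∑ j ∈ s, v j * log (v j / A) + B * ∑ j ∈ t \ s, v j * log (A / v j) := by
    have e₁ : ∑ j ∈ s, v j * log (v j / A) = ∑ j ∈ s, v j * log (v j) - B * log A := by
      rw [sum_mul, ← sum_sub_distrib]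
      exact sum_congr rfl fun j hj => by rw [log_div (hvs j hj).ne' hA.ne']; ring
    have e₂ : ∑ j ∈ t \ s, v j * log (A / v j) = C * log A - ∑ j ∈ t \ s, v j * log (v j) := by
      rw [sum_mul, ← sum_sub_distrib]
      exact sum_congr rfl fun j hj => by rw [log_div hA.ne' (hvc j hj).ne']; ring
    rw [e₁, e₂, ← sum_sdiff hst (f := fun j => v j * log (v j)), ← hCBA]
    ring
  have hs_nonpos : ∑ j ∈ s, v j * log (v j / A) ≤ 0 :=
    sum_nonpos fun j hj => mul_nonpos_of_nonneg_of_nonpos (hvs j hj).le <|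
      log_nonpos (div_nonneg (hvs j hj).le hA.le)
        ((div_le_one hA).mpr (single_le_sum (fun k hk => (hv k hk).le) (hst hj)))
  have hentropy : ∑ j ∈ t \ s, v j * log (A / v j) ≤ A * (exp 1)⁻¹ + A * log #t := by
    have hN : (0 : ℝ) < #t := by positivity
    have hcard : (#(t \ s) : ℝ) ≤ #t := by exact_mod_cast card_le_card sdiff_subset
    calc ∑ j ∈ t \ s, v j * log (A / v j)
        ≤ #(t \ s) * A / (exp 1 * #t) + C * log #t := sum_mul_log_div_le hvc hA hN
      _ ≤ #t * A / (exp 1 * #t) + A * log #t := by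
          gcongr
          linarith
      _ = A * (exp 1)⁻¹ + A * log #t := by field_simp
  calc (∑ j ∈ s, v j * log (v j)) * A - B * (∑ j ∈ t, v j * log (v j))
      = C * ∑ j ∈ s, v j * log (v j / A) + B * ∑ j ∈ t \ s, v j * log (A / v j) := hcentre
    _ ≤ 0 + B * (A * log #t + A * log #t) := by
        gcongr
        · exact mul_nonpos_of_nonneg_of_nonpos hC hs_nonpos
        · linarith [mul_le_mul_of_nonneg_left hlogN hA.le]
    _ ≤ 0 + A * (A * log #t + A * log #t) := by
        gcongr
        linarith
    _ = 2 * log #t * A ^ 2 := by ring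

lemma hasDerivAt_rpow_exp {a : ℝ} (ha : 0 < a) (τ : ℝ) :
    HasDerivAt (fun τ => a ^ exp τ) (a ^ exp τ * log (a ^ exp τ)) τ := by
  refine (((hasStrictDerivAt_const_rpow ha (exp τ)).hasDerivAt).comp τ
    (hasDerivAt_exp τ)).congr_deriv ?_
  rw [log_rpow ha]
  ring

lemma hasDerivAt_sum_rpow_exp_div (hst : s ⊆ t) (ht : t.Nonempty) (hw : ∀ j ∈ t, 0 < w j)
    (τ : ℝ) :
    HasDerivAt (fun τ => (∑ j ∈ s, w j ^ exp τ) / ∑ j ∈ t, w j ^ exp τ)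
      (((∑ j ∈ s, w j ^ exp τ * log (w j ^ exp τ)) * (∑ j ∈ t, w j ^ exp τ)
          - (∑ j ∈ s, w j ^ exp τ) * (∑ j ∈ t, w j ^ exp τ * log (w j ^ exp τ)))
        / (∑ j ∈ t, w j ^ exp τ) ^ 2) τ :=
  (HasDerivAt.fun_sum fun j hj => hasDerivAt_rpow_exp (hw j (hst hj)) τ).div
    (HasDerivAt.fun_sum fun j hj => hasDerivAt_rpow_exp (hw j hj) τ)
    (sum_pos (fun j hj => rpow_pos_of_pos (hw j hj) _) ht).ne'

lemma sum_rpow_div_sub_le [DecidableEq ι] (hst : s ⊆ t) (ht : 2 ≤ #t)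
    (hw : ∀ j ∈ t, 0 < w j) {α β : ℝ} (hα : 0 < α) (hαβ : α ≤ β) :
    (∑ j ∈ s, w j ^ β) / (∑ j ∈ t, w j ^ β) - (∑ j ∈ s, w j ^ α) / (∑ j ∈ t, w j ^ α)
      ≤ 2 * log #t * (log β - log α) := by
  have hderiv := hasDerivAt_sum_rpow_exp_div hst (card_pos.mp (by omega)) hw
  have hderiv_le (τ : ℝ) :
      deriv (fun τ => (∑ j ∈ s, w j ^ exp τ) / ∑ j ∈ t, w j ^ exp τ) τ ≤ 2 * log #t := by
    have hv : ∀ j ∈ t, 0 < w j ^ exp τ := fun j hj => rpow_pos_of_pos (hw j hj) _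
    rw [(hderiv τ).deriv, div_le_iff₀ (pow_pos (sum_pos hv (card_pos.mp (by omega))) 2)]
    exact sum_mul_log_mul_sum_sub_le hst ht hv
  simpa only [exp_log hα, exp_log (hα.trans_le hαβ)] using
    image_sub_le_mul_sub_of_deriv_le (fun τ => (hderiv τ).differentiableAt) hderiv_le
      (log_le_log hα hαβ)

end LogDerivative

theorem stmt15_general (n : ℕ) (hn : 2 ≤ n) (d : ℕ → ℝ)
    (hpos : ∀ j, j < n → 0 < d j)
    (αl αh : ℝ) (h0 : 0 < αl) (hlh : αl < αh)
    (x y : ℝ → ℕ)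
    (hx : ∀ z ∈ Set.Ico (0:ℝ) 1,
      z < (∑ j ∈ Finset.range (x z), d j ^ αl) / (∑ j ∈ Finset.range n, d j ^ αl) ∧
      ∀ i < x z,
        (∑ j ∈ Finset.range i, d j ^ αl) / (∑ j ∈ Finset.range n, d j ^ αl) ≤ z)
    (hy : ∀ z ∈ Set.Ico (0:ℝ) 1,
      z < (∑ j ∈ Finset.range (y z), d j ^ αh) / (∑ j ∈ Finset.range n, d j ^ αh) ∧
      ∀ i < y z,
        (∑ j ∈ Finset.range i, d j ^ αh) / (∑ j ∈ Finset.range n, d j ^ αh) ≤ z) :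
    ∫ z in (0:ℝ)..1, ((x z : ℝ) - (y z : ℝ))
      ≤ 4 * n * Real.log n * (Real.log αh - Real.log αl) := by
  set F : ℝ → ℕ → ℝ := fun α i => (∑ j ∈ range i, d j ^ α) / ∑ j ∈ range n, d j ^ α
  have hmin (α : ℝ) {m : ℝ → ℕ}
      (hm : ∀ z ∈ Set.Ico (0:ℝ) 1, z < F α (m z) ∧ ∀ i < m z, F α i ≤ z) :=
    intervalIntegral_eq_sum_of_isLeast
      (monotoneOn_sum_range_div fun j hj => (rpow_pos_of_pos (hpos j hj) α).le) (by simp)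
      (div_self (sum_pos (fun j hj => rpow_pos_of_pos (hpos j (mem_range.mp hj)) α)
        (nonempty_range_iff.mpr (by omega))).ne') hm
  obtain ⟨hx_int, hx_eq⟩ := hmin αl hx
  obtain ⟨hy_int, hy_eq⟩ := hmin αh hy
  have hΔ : 0 ≤ log n * (log αh - log αl) :=
    mul_nonneg (log_nonneg (by exact_mod_cast (by omega : 1 ≤ n)))
      (sub_nonneg.mpr (log_le_log h0 hlh.le))
  calc ∫ z in (0:ℝ)..1, ((x z : ℝ) - (y z : ℝ))
      = ∑ i ∈ range n, (F αh i - F αl i) := by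
        rw [intervalIntegral.integral_sub hx_int hy_int, hx_eq, hy_eq, ← sum_sub_distrib]
        exact sum_congr rfl fun _ _ => by ring
    _ ≤ ∑ i ∈ range n, 2 * log n * (log αh - log αl) := sum_le_sum fun i hi => by
        simpa using sum_rpow_div_sub_le (range_subset_range.mpr (mem_range.mp hi).le)
          (by simpa using hn) (fun j hj => hpos j (mem_range.mp hj)) h0 hlh.le
    _ ≤ 4 * n * log n * (log αh - log αl) := by
        rw [sum_const, card_range, nsmul_eq_mul]
        nlinarith [mul_nonneg (Nat.cast_nonneg n) hΔ]

/-- Expected number of breakpoints in one round of `d^α`-sampling over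
`[α_ℓ, α_h]`: if `x z` (resp. `y z`) is the minimal index with
`D_{x}(α_ℓ)/D_n(α_ℓ) > z` (resp. `D_y(α_h)/D_n(α_h) > z`), then
`E_z[x(z) − y(z)] ≤ 4 n ln(n) (ln α_h − ln α_ℓ)`. -/
theorem stmt15 (n : ℕ) (hn : 2 ≤ n) (d : ℕ → ℝ)
    (hpos : ∀ j, j < n → 0 < d j)
    (hsorted : ∀ j k, j ≤ k → k < n → d k ≤ d j)
    (αl αh : ℝ) (h0 : 0 < αl) (hlh : αl < αh)
    (x y : ℝ → ℕ)
    (hx : ∀ z ∈ Set.Ico (0:ℝ) 1,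
      z < (∑ j ∈ Finset.range (x z), d j ^ αl) / (∑ j ∈ Finset.range n, d j ^ αl) ∧
      ∀ i < x z,
        (∑ j ∈ Finset.range i, d j ^ αl) / (∑ j ∈ Finset.range n, d j ^ αl) ≤ z)
    (hy : ∀ z ∈ Set.Ico (0:ℝ) 1,
      z < (∑ j ∈ Finset.range (y z), d j ^ αh) / (∑ j ∈ Finset.range n, d j ^ αh) ∧
      ∀ i < y z,
        (∑ j ∈ Finset.range i, d j ^ αh) / (∑ j ∈ Finset.range n, d j ^ αh) ≤ z) :
    ∫ z in (0:ℝ)..1, ((x z : ℝ) - (y z : ℝ))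
      ≤ 4 * n * Real.log n * (Real.log αh - Real.log αl) :=
  stmt15_general n hn d hpos αl αh h0 hlh x y hx hy
end
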